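/- Assume the trust-region parameter block. Let Δ > 0 and let H ∈ ℝⁿ satisfy ‖H‖ ≥ (ζ − κ_grad)·Δ. Let ared, pred, cred be real numbers with pred ≥ κ_fcd·‖H‖·min{‖H‖/κ_bmh, Δ}, |cred − ared| ≤ η·pred, and |ared − pred| ≤ 2·κ_val·Δ². Then pred > 0, cred/pred ≥ η₁, and ‖H‖ ≥ η₂·Δ; that is, both trust-region step acceptance conditions hold. -/
import Mathlib


set_option maxHeartbeats 1000000 in
theorem stmt_9 {n : ℕ} (L κbmh κgrad κfcd η₂ η₁ η ζ : ℝ)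
    (hL : 0 < L) (hκbmh : 1 ≤ κbmh) (hκgrad : 0 < κgrad) (hκfcd : 0 < κfcd)
    (hη₂ : 0 < η₂) (hη₁ : η₁ ∈ Set.Ioo (0 : ℝ) 1)
    (hη : η ∈ Set.Ioo 0 (min η₁ (1 - η₁)))
    (hζ : ζ ≥ κgrad + max η₂
      (4 * ((L + κbmh + 2 * κgrad) / 4) / ((1 - η₁ - η) * min κfcd 1)))
    (Δ : ℝ) (hΔ : 0 < Δ)
    (H : EuclideanSpace ℝ (Fin n)) (hH : ‖H‖ ≥ (ζ - κgrad) * Δ)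
    (ared pred cred : ℝ)
    (hpred : pred ≥ κfcd * ‖H‖ * min (‖H‖ / κbmh) Δ)
    (hcred : |cred - ared| ≤ η * pred)
    (hared : |ared - pred| ≤ 2 * ((L + κbmh + 2 * κgrad) / 4) * Δ ^ 2) :
    0 < pred ∧ cred / pred ≥ η₁ ∧ ‖H‖ ≥ η₂ * Δ := by
  obtain ⟨hη₁0, hη₁1⟩ := hη₁
  obtain ⟨hη0, hηlt⟩ := hη
  have hη2 : η < 1 - η₁ := lt_of_lt_of_le hηlt (min_le_right _ _)
  have hη1' : η < η₁ := lt_of_lt_of_le hηlt (min_le_left _ _)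
  set κval := (L + κbmh + 2 * κgrad) / 4 with hκv
  have hκval : 0 < κval := by rw [hκv]; nlinarith
  set m := min κfcd 1 with hmdef
  have hm : 0 < m := lt_min hκfcd one_pos
  have hm1 : m ≤ 1 := min_le_right _ _
  have hmκ : m ≤ κfcd := min_le_left _ _
  have hden : 0 < 1 - η₁ - η := by linarith
  set c := 4 * κval / ((1 - η₁ - η) * m) with hcdef
  have hd : 0 < (1 - η₁ - η) * m := mul_pos hden hm
  have hcpos : 0 < c := div_pos (by linarith) hd
  have hcd : c * ((1 - η₁ - η) * m) = 4 * κval := div_mul_cancel₀ _ (ne_of_gt hd)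
  have hd1 : (1 - η₁ - η) * m ≤ 1 := by nlinarith
  have hc4 : c ≥ 4 * κval := by nlinarith
  have hζc : ζ - κgrad ≥ c := le_trans (le_max_right _ _) (by linarith)
  have hζη₂ : ζ - κgrad ≥ η₂ := le_trans (le_max_left _ _) (by linarith)
  have hHη₂ : ‖H‖ ≥ η₂ * Δ :=
    le_trans (mul_le_mul_of_nonneg_right hζη₂ hΔ.le) hH
  have hHc : ‖H‖ ≥ c * Δ :=
    le_trans (mul_le_mul_of_nonneg_right hζc hΔ.le) hH
  have hcκb : c ≥ κbmh := by nlinarith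
  have hκbpos : (0:ℝ) < κbmh := by linarith
  have hmin : min (‖H‖ / κbmh) Δ = Δ := by
    apply min_eq_right
    rw [le_div_iff₀ hκbpos]
    have h1 : κbmh * Δ ≤ c * Δ := mul_le_mul_of_nonneg_right hcκb hΔ.le
    linarith
  rw [hmin] at hpred
  have e1 : κfcd * (c * Δ) * Δ ≤ κfcd * ‖H‖ * Δ :=
    mul_le_mul_of_nonneg_right (mul_le_mul_of_nonneg_left hHc hκfcd.le) hΔ.le
  have e2 : m * (c * Δ) * Δ ≤ κfcd * (c * Δ) * Δ :=
    mul_le_mul_of_nonneg_right (mul_le_mul_of_nonneg_right hmκ (mul_pos hcpos hΔ).le) hΔ.le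
  have e3 : m * (c * Δ) * Δ ≤ pred := by linarith
  have hcd2 : c * ((1 - η₁ - η) * m) * Δ ^ 2 = 4 * κval * Δ ^ 2 := by rw [hcd]
  have hpredlb : (1 - η₁ - η) * pred ≥ 4 * κval * Δ ^ 2 := by
    have e4 := mul_le_mul_of_nonneg_left e3 hden.le
    linarith [e4, hcd2]
  have h4 : 0 < (1 - η₁ - η) * pred := lt_of_lt_of_le (mul_pos (by linarith : (0:ℝ) < 4 * κval) (pow_pos hΔ 2)) hpredlb
  have hpredpos : 0 < pred := by nlinarith [h4]
  obtain ⟨hc1, hc2⟩ := abs_le.mp hcred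
  obtain ⟨ha1, ha2⟩ := abs_le.mp hared
  refine ⟨hpredpos, ?_, hHη₂⟩
  rw [ge_iff_le, le_div_iff₀ hpredpos]
  linarith [mul_nonneg hκval.le (sq_nonneg Δ)]
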